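/- Let A ∈ ℝ^{p×p} be symmetric positive semidefinite, S ∈ ℝ^p, β ∈ ℝ^p with support T = {j : β_j ≠ 0} of cardinality s, λ > 0, and let β̂ be any minimizer of f(b) = (1/2)bᵀAb − bᵀS + λ‖b‖₁ over ℝ^p. If λ ≥ 2‖S − Aβ‖_∞, then h = β̂ − β satisfies: (i) the cone condition ‖h_{T^c}‖₁ ≤ 3‖h_T‖₁; (ii) hᵀAh ≤ 3λ√s·‖h‖₂. If in addition there is κ > 0 with κ‖v‖₂² ≤ vᵀAv for every v ∈ ℝ^p satisfying ‖v_{T^c}‖₁ ≤ 3‖v_T‖₁, then ‖h‖₂ ≤ 3λ√s/κ, ‖h‖₁ ≤ 12λs/κ, and hᵀAh ≤ 9λ²s/κ. -/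

import Mathlib

open MeasureTheory ProbabilityTheory Filter Matrix Real Topology
open scoped ENNReal NNReal

noncomputable section

namespace ProxyData

def l0 {p : ℕ} (v : Fin p → ℝ) : ℕ := (Function.support v).ncard

def l1 {p : ℕ} (v : Fin p → ℝ) : ℝ := ∑ i, |v i|

def l2sq {p : ℕ} (v : Fin p → ℝ) : ℝ := ∑ i, (v i) ^ 2

def linf {p : ℕ} (v : Fin p → ℝ) : ℝ := ⨆ i, |v i|

def gaussianVec {p : ℕ} (S : Matrix (Fin p) (Fin p) ℝ) (hS : S.PosSemidef) :
    Measure (Fin p → ℝ) :=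
  (Measure.pi fun _ : Fin p => gaussianReal 0 1).map fun z =>
    ((hS.1.eigenvectorUnitary : Matrix (Fin p) (Fin p) ℝ) *
      diagonal ((↑) ∘ (Real.sqrt ∘ hS.1.eigenvalues)) *
      (star (hS.1.eigenvectorUnitary : Matrix (Fin p) (Fin p) ℝ))) *ᵥ z

def EigBounds {p : ℕ} (S : Matrix (Fin p) (Fin p) ℝ) (C₁ : ℝ) : Prop :=
  S.IsSymm ∧ ∀ v : Fin p → ℝ, C₁⁻¹ * l2sq v ≤ v ⬝ᵥ S *ᵥ v ∧ v ⬝ᵥ S *ᵥ v ≤ C₁ * l2sq v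

def SubGaussianLaw (ν : Measure ℝ) (K : ℝ) : Prop :=
  ∀ l : ℕ, 1 ≤ l → (∫ x, |x| ^ l ∂ν) ^ ((l : ℝ)⁻¹) ≤ K * Real.sqrt l

def NoiseLaw (ν : Measure ℝ) (σ K : ℝ) : Prop :=
  IsProbabilityMeasure ν ∧ Integrable (fun x => x) ν ∧ Integrable (fun x => x ^ 2) ν ∧
    (∫ x, x ∂ν) = 0 ∧ (∫ x, x ^ 2 ∂ν) = σ ^ 2 ∧ SubGaussianLaw ν K

abbrev SampleSpace (p n m : ℕ) :=
  (Fin n → Fin p → ℝ) × (Fin n → ℝ) × (Fin m → Fin p → ℝ)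

def modelMeasure {p : ℕ} (n m : ℕ) (S : Matrix (Fin p) (Fin p) ℝ) (hS : S.PosSemidef)
    (ν : Measure ℝ) : Measure (SampleSpace p n m) :=
  (Measure.pi fun _ : Fin n => gaussianVec S hS).prod
    ((Measure.pi fun _ : Fin n => ν).prod (Measure.pi fun _ : Fin m => gaussianVec S hS))

def yVal {p n m : ℕ} (β : Fin p → ℝ) (ω : SampleSpace p n m) (i : Fin n) : ℝ :=
  (∑ j, ω.1 i j * β j) + ω.2.1 i

def Shat {p n m : ℕ} (β : Fin p → ℝ) (ω : SampleSpace p n m) : Fin p → ℝ :=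
  fun j => (∑ i, ω.1 i j * yVal β ω i) / n

def SigTilde {p n m : ℕ} (ω : SampleSpace p n m) : Matrix (Fin p) (Fin p) ℝ :=
  fun j k => (∑ i, ω.2.2 i j * ω.2.2 i k) / m

def gammaNN {p : ℕ} (S : Matrix (Fin p) (Fin p) ℝ) (β : Fin p → ℝ) (σ : ℝ) (n m : ℕ) : ℝ :=
  σ ^ 2 + (β ⬝ᵥ S *ᵥ β) * ((n : ℝ) / m + 1)

def lassoObj {p : ℕ} (A : Matrix (Fin p) (Fin p) ℝ) (s : Fin p → ℝ) (lam : ℝ)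
    (b : Fin p → ℝ) : ℝ :=
  (1 / 2) * (b ⬝ᵥ A *ᵥ b) - b ⬝ᵥ s + lam * l1 b

def IsLassoSol {p : ℕ} (A : Matrix (Fin p) (Fin p) ℝ) (s : Fin p → ℝ) (lam : ℝ)
    (bhat : Fin p → ℝ) : Prop :=
  ∀ b, lassoObj A s lam bhat ≤ lassoObj A s lam b

def DantzigFeas {p : ℕ} (A : Matrix (Fin p) (Fin p) ℝ) (t : Fin p → ℝ) (lam : ℝ)
    (w : Fin p → ℝ) : Prop :=
  linf (fun i => (A *ᵥ w) i - t i) ≤ lam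

def IsDantzigSol {p : ℕ} (A : Matrix (Fin p) (Fin p) ℝ) (t : Fin p → ℝ) (lam : ℝ)
    (w : Fin p → ℝ) : Prop :=
  DantzigFeas A t lam w ∧ ∀ w', DantzigFeas A t lam w' → l1 w ≤ l1 w'

def stdNormalCDF (t : ℝ) : ℝ := (gaussianReal 0 1 (Set.Iic t)).toReal

def BigOP {Ωs : ℕ → Type*} [∀ k, MeasurableSpace (Ωs k)] (μ : ∀ k, Measure (Ωs k))
    (X : ∀ k, Ωs k → ℝ) (r : ℕ → ℝ) : Prop :=
  ∀ ε : ℝ, 0 < ε → ∃ C : ℝ, 0 < C ∧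
    ∀ᶠ k in atTop, (μ k {ω | C * r k < |X k ω|}).toReal ≤ ε

def TendstoStdNormal {Ωs : ℕ → Type*} [∀ k, MeasurableSpace (Ωs k)] (μ : ∀ k, Measure (Ωs k))
    (X : ∀ k, Ωs k → ℝ) : Prop :=
  ∀ t : ℝ, Tendsto (fun k => (μ k {ω | X k ω ≤ t}).toReal) atTop (𝓝 (stdNormalCDF t))

def omegaCol {p : ℕ} (S : Matrix (Fin p) (Fin p) ℝ) (j : Fin p) : Fin p → ℝ := fun i => S⁻¹ i j

def zstat {p n m : ℕ} (S : Matrix (Fin p) (Fin p) ℝ) (β : Fin p → ℝ) (j : Fin p)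
    (ω : SampleSpace p n m) : ℝ :=
  omegaCol S j ⬝ᵥ (fun i => Shat β ω i - (S *ᵥ β) i)
    + omegaCol S j ⬝ᵥ ((S - SigTilde ω) *ᵥ β)

def Vts {p : ℕ} (S : Matrix (Fin p) (Fin p) ℝ) (β : Fin p → ℝ) (σ : ℝ) (n m : ℕ)
    (j : Fin p) : ℝ :=
  S⁻¹ j j * gammaNN S β σ n m / n + (β j) ^ 2 / n + (β j) ^ 2 / m


/-!
Comparing the Lasso objective at `β̂` with its value at `β` gives the basic inequality
`½ hᵀAh ≤ hᵀ(S − Aβ) + λ(‖β‖₁ − ‖β̂‖₁)` for `h = β̂ − β`. Hölder and the choice of `λ` bound the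
first term by `(λ/2)‖h‖₁`, and since `β` vanishes off `T` the second is at most
`λ(‖h_T‖₁ − ‖h_{Tᶜ}‖₁)`; together `hᵀAh + λ‖h_{Tᶜ}‖₁ ≤ 3λ‖h_T‖₁`. This yields the cone condition
and, via Cauchy–Schwarz `‖h_T‖₁ ≤ √s‖h‖₂`, the bound `hᵀAh ≤ 3λ√s‖h‖₂`. Combined with the restricted
eigenvalue bound `κ‖h‖₂² ≤ hᵀAh`, this gives the remaining estimates.
-/

section Norms

variable {p : ℕ}

lemma l1_nonneg (v : Fin p → ℝ) : 0 ≤ l1 v :=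
  Finset.sum_nonneg fun _ _ => abs_nonneg _

lemma l2sq_nonneg (v : Fin p → ℝ) : 0 ≤ l2sq v :=
  Finset.sum_nonneg fun _ _ => sq_nonneg _

lemma l1_eq_l1_indicator_add_l1_indicator_compl (T : Set (Fin p)) (v : Fin p → ℝ) :
    l1 v = l1 (T.indicator v) + l1 (Tᶜ.indicator v) := by
  classical
  rw [l1, l1, l1, ← Finset.sum_add_distrib]
  refine Finset.sum_congr rfl fun i _ => ?_
  by_cases hi : i ∈ T <;> simp [hi]

lemma dotProduct_le_l1_mul_linf (v w : Fin p → ℝ) : v ⬝ᵥ w ≤ l1 v * linf w := by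
  rw [dotProduct, l1, Finset.sum_mul]
  refine Finset.sum_le_sum fun i _ => ?_
  calc v i * w i ≤ |v i| * |w i| := by rw [← abs_mul]; exact le_abs_self _
    _ ≤ |v i| * linf w :=
      mul_le_mul_of_nonneg_left (le_ciSup (f := fun j => |w j|) (Finite.bddAbove_range _) i)
        (abs_nonneg _)

lemma l1_indicator_le_sqrt_ncard_mul_sqrt_l2sq (T : Set (Fin p)) (v : Fin p → ℝ) :
    l1 (T.indicator v) ≤ √(T.ncard) * √(l2sq v) := by
  classical
  have hl1 : l1 (T.indicator v) = ∑ i ∈ T.toFinset, 1 * |v i| := by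
    rw [l1, ← Finset.sum_subset (Finset.subset_univ T.toFinset)]
    · exact Finset.sum_congr rfl fun i hi => by simp [Set.mem_toFinset.mp hi]
    · intro i _ hi
      simp [Set.notMem_of_mem_compl (Set.mem_toFinset.not.mp hi)]
  have hl2 : ∑ i ∈ T.toFinset, |v i| ^ 2 ≤ l2sq v := by
    simp only [sq_abs]
    exact Finset.sum_le_sum_of_subset_of_nonneg (Finset.subset_univ _)
      fun _ _ _ => sq_nonneg _
  calc l1 (T.indicator v)
      ≤ √(∑ _i ∈ T.toFinset, (1 : ℝ) ^ 2) * √(∑ i ∈ T.toFinset, |v i| ^ 2) :=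
        hl1 ▸ Real.sum_mul_le_sqrt_mul_sqrt _ _ _
    _ ≤ √(T.ncard) * √(l2sq v) := by
        rw [Set.ncard_eq_toFinset_card']
        simp only [one_pow, Finset.sum_const, nsmul_eq_mul, mul_one]
        gcongr

lemma l1_sub_l1_le_of_support_subset {β : Fin p → ℝ} {T : Set (Fin p)}
    (hβ : Function.support β ⊆ T) (b : Fin p → ℝ) :
    l1 β - l1 b ≤ l1 (T.indicator (b - β)) - l1 (Tᶜ.indicator (b - β)) := by
  classical
  simp only [l1, ← Finset.sum_sub_distrib]
  refine Finset.sum_le_sum fun i _ => ?_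
  by_cases hi : i ∈ T
  · simpa [hi, abs_sub_comm] using abs_sub_abs_le_abs_sub (β i) (b i)
  · have hβi : β i = 0 := Function.notMem_support.mp fun h => hi (hβ h)
    simp [hi, hβi]

end Norms

lemma le_div_of_mul_sq_le_mul {κ c R : ℝ} (hκ : 0 < κ) (hc : 0 ≤ c) (hR : 0 ≤ R)
    (h : κ * R ^ 2 ≤ c * R) : R ≤ c / κ := by
  rw [le_div_iff₀ hκ]
  rcases hR.eq_or_lt with rfl | hR
  · simpa using hc
  · nlinarith

section Lasso

variable {p : ℕ} {A : Matrix (Fin p) (Fin p) ℝ} {S β βhat : Fin p → ℝ} {lam : ℝ}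

lemma IsLassoSol.half_quadForm_le (hA : A.IsSymm) (hmin : IsLassoSol A S lam βhat) :
    (1 / 2) * ((βhat - β) ⬝ᵥ A *ᵥ (βhat - β))
      ≤ (βhat - β) ⬝ᵥ (S - A *ᵥ β) + lam * (l1 β - l1 βhat) := by
  have hopt := hmin β
  set h := βhat - β with hh
  clear_value h
  have hsymm : h ⬝ᵥ A *ᵥ β = β ⬝ᵥ A *ᵥ h := by
    rw [dotProduct_comm, dotProduct_mulVec, ← mulVec_transpose, hA.eq]
  obtain rfl : βhat = β + h := by rw [hh, add_sub_cancel]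
  simp only [lassoObj, mulVec_add, dotProduct_add, add_dotProduct, dotProduct_sub] at hopt ⊢
  linarith

theorem IsLassoSol.quadForm_add_mul_l1_compl_le (hA : A.IsSymm) (hlam : 0 ≤ lam)
    {T : Set (Fin p)} (hβ : Function.support β ⊆ T) (hmin : IsLassoSol A S lam βhat)
    (hdual : 2 * linf (S - A *ᵥ β) ≤ lam) :
    (βhat - β) ⬝ᵥ A *ᵥ (βhat - β) + lam * l1 (Tᶜ.indicator (βhat - β))
      ≤ 3 * lam * l1 (T.indicator (βhat - β)) := by
  have hbasic := hmin.half_quadForm_le (β := β) hA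
  have hnoise : (βhat - β) ⬝ᵥ (S - A *ᵥ β) ≤ lam / 2 * l1 (βhat - β) := by
    have := dotProduct_le_l1_mul_linf (βhat - β) (S - A *ᵥ β)
    nlinarith [l1_nonneg (βhat - β)]
  have hl1 := mul_le_mul_of_nonneg_left (l1_sub_l1_le_of_support_subset hβ βhat) hlam
  rw [l1_eq_l1_indicator_add_l1_indicator_compl T] at hnoise
  linarith

end Lasso

/-- the deterministic oracle inequality for the (two-sample) Lasso.
If `λ ≥ 2‖S − Aβ‖_∞` and `β̂` minimizes `(1/2)bᵀAb − bᵀS + λ‖b‖₁`, then `h = β̂ − β`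
satisfies the cone condition, `hᵀAh ≤ 3λ√s‖h‖₂`, and under a restricted eigenvalue
condition also `‖h‖₂ ≤ 3λ√s/κ`, `‖h‖₁ ≤ 12λs/κ` and `hᵀAh ≤ 9λ²s/κ`. -/
theorem statement_14 {p : ℕ} (A : Matrix (Fin p) (Fin p) ℝ) (hA : A.PosSemidef)
    (S β βhat : Fin p → ℝ) (lam : ℝ) (hlam : 0 < lam)
    (T : Set (Fin p)) (hT : T = Function.support β)
    (hmin : ∀ b, lassoObj A S lam βhat ≤ lassoObj A S lam b)
    (hdual : 2 * linf (fun i => S i - (A *ᵥ β) i) ≤ lam) :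
    -- (i) cone condition
    (l1 (Tᶜ.indicator fun i => βhat i - β i) ≤ 3 * l1 (T.indicator fun i => βhat i - β i)) ∧
    -- (ii) basic inequality
    ((fun i => βhat i - β i) ⬝ᵥ A *ᵥ (fun i => βhat i - β i)
        ≤ 3 * lam * Real.sqrt (T.ncard) * Real.sqrt (l2sq fun i => βhat i - β i)) ∧
    -- (iii) bounds under the restricted eigenvalue condition
    (∀ κ : ℝ, 0 < κ →
      (∀ v : Fin p → ℝ, l1 (Tᶜ.indicator v) ≤ 3 * l1 (T.indicator v) →
        κ * l2sq v ≤ v ⬝ᵥ A *ᵥ v) →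
      Real.sqrt (l2sq fun i => βhat i - β i) ≤ 3 * lam * Real.sqrt (T.ncard) / κ ∧
      l1 (fun i => βhat i - β i) ≤ 12 * lam * T.ncard / κ ∧
      (fun i => βhat i - β i) ⬝ᵥ A *ᵥ (fun i => βhat i - β i) ≤ 9 * lam ^ 2 * T.ncard / κ) := by
  change l1 (Tᶜ.indicator (βhat - β)) ≤ 3 * l1 (T.indicator (βhat - β)) ∧ _
  set h := βhat - β
  have key := IsLassoSol.quadForm_add_mul_l1_compl_le (isHermitian_iff_isSymm.mp hA.1) hlam.le
    hT.ge hmin hdual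
  have hQ : 0 ≤ h ⬝ᵥ A *ᵥ h := hA.dotProduct_mulVec_nonneg h
  have hCS := l1_indicator_le_sqrt_ncard_mul_sqrt_l2sq T h
  have cone : l1 (Tᶜ.indicator h) ≤ 3 * l1 (T.indicator h) :=
    le_of_mul_le_mul_left (by linarith) hlam
  have basic : h ⬝ᵥ A *ᵥ h ≤ 3 * lam * √(T.ncard) * √(l2sq h) := by
    nlinarith [l1_nonneg (Tᶜ.indicator h)]
  refine ⟨cone, basic, fun κ hκ hRE => ?_⟩
  have hl2 : √(l2sq h) ≤ 3 * lam * √(T.ncard) / κ := by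
    refine le_div_of_mul_sq_le_mul hκ (by positivity) (Real.sqrt_nonneg _) ?_
    rw [Real.sq_sqrt (l2sq_nonneg h)]
    exact (hRE h cone).trans basic
  have hs : √(T.ncard) * √(T.ncard) = (T.ncard : ℝ) := Real.mul_self_sqrt (Nat.cast_nonneg _)
  refine ⟨hl2, ?_, ?_⟩
  · calc l1 h ≤ 4 * (√(T.ncard) * √(l2sq h)) := by
          linarith [l1_eq_l1_indicator_add_l1_indicator_compl T h]
      _ ≤ 4 * (√(T.ncard) * (3 * lam * √(T.ncard) / κ)) := by gcongr
      _ = 12 * lam * T.ncard / κ := by linear_combination 12 * lam / κ * hs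
  · calc h ⬝ᵥ A *ᵥ h ≤ 3 * lam * √(T.ncard) * (3 * lam * √(T.ncard) / κ) := by
          refine basic.trans ?_; gcongr
      _ = 9 * lam ^ 2 * T.ncard / κ := by linear_combination 9 * lam ^ 2 / κ * hs

end ProxyData
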